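/- arXiv:2305.16525 — 6 statements merged into one kernel-verified Lean document; each statement's English description precedes it below -/
import Mathlib

section
/- Let α be a linearly ordered set, c ∈ (0,1), r ≥ 1, and let Z₁, …, Z_r be pairwise disjoint finite nonempty subsets of α with N = |Z₁| + … + |Z_r|. For each i ∈ {1,…,r} let p_i ∈ Z_i be a c-pivot of Z_i. Suppose m ∈ {1,…,r} is such that p_m is a weighted median of p₁,…,p_r with multiplicities |Z₁|,…,|Z_r|, that is, Σ_{i : p_i ≤ p_m} |Z_i| ≥ N/2 and Σ_{i : p_i ≥ p_m} |Z_i| ≥ N/2. Then p_m is a (c/2)-pivot of Z₁ ∪ … ∪ Z_r. -/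
/-- `p` is a `c`-pivot of the finite set `Z` with respect to the ranking function `f`:
`p ∈ Z`, at least `c·|Z|` elements of `Z` are ranked at most `f p`, and at least
`c·|Z|` elements of `Z` are ranked at least `f p`. -/
def IsCPivot {α β : Type*} [LinearOrder β] (c : ℝ) (Z : Finset α) (f : α → β) (p : α) : Prop :=
  p ∈ Z ∧
  c * (Z.card : ℝ) ≤ ((Z.filter (fun z => f z ≤ f p)).card : ℝ) ∧
  c * (Z.card : ℝ) ≤ ((Z.filter (fun z => f p ≤ f z)).card : ℝ)

theorem stmt0 {α : Type*} [LinearOrder α]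
    (c : ℝ) (hc0 : 0 < c) (hc1 : c < 1)
    (r : ℕ) (hr : 1 ≤ r)
    (Z : Fin r → Finset α)
    (hdisj : ∀ i j : Fin r, i ≠ j → Disjoint (Z i) (Z j))
    (hne : ∀ i, (Z i).Nonempty)
    (N : ℕ) (hN : N = ∑ i, (Z i).card)
    (p : Fin r → α)
    (hpiv : ∀ i, IsCPivot c (Z i) id (p i))
    (m : Fin r)
    (hmed₁ : (N : ℝ) / 2 ≤ ∑ i ∈ Finset.univ.filter (fun i => p i ≤ p m), ((Z i).card : ℝ))
    (hmed₂ : (N : ℝ) / 2 ≤ ∑ i ∈ Finset.univ.filter (fun i => p m ≤ p i), ((Z i).card : ℝ)) :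
    IsCPivot (c / 2) (Finset.univ.biUnion Z) id (p m) := by
  have hcardU : ((Finset.univ.biUnion Z).card : ℝ) = (N : ℝ) := by
    rw [Finset.card_biUnion (fun i _ j _ hij => hdisj i j hij), hN]
  refine ⟨Finset.mem_biUnion.mpr ⟨m, Finset.mem_univ m, (hpiv m).1⟩, ?_, ?_⟩
  · set S := Finset.univ.filter (fun i => p i ≤ p m) with hS
    have hsub : (S.biUnion (fun i => (Z i).filter (fun z => id z ≤ id (p i)))) ⊆
        (Finset.univ.biUnion Z).filter (fun z => id z ≤ id (p m)) := by
      intro x hx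
      simp only [Finset.mem_biUnion, Finset.mem_filter, hS, Finset.mem_univ, true_and, id] at hx ⊢
      obtain ⟨i, hi, hxZ, hxle⟩ := hx
      exact ⟨⟨i, hxZ⟩, hxle.trans hi⟩
    have hcard : (S.biUnion (fun i => (Z i).filter (fun z => id z ≤ id (p i)))).card
        = ∑ i ∈ S, ((Z i).filter (fun z => id z ≤ id (p i))).card :=
      Finset.card_biUnion (fun i _ j hj hij =>
        (hdisj i j hij).mono (Finset.filter_subset _ _) (Finset.filter_subset _ _))
    have h1 : c / 2 * (N : ℝ) ≤ ∑ i ∈ S, (((Z i).filter (fun z => id z ≤ id (p i))).card : ℝ) := by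
      calc c / 2 * (N : ℝ) ≤ c * (∑ i ∈ S, ((Z i).card : ℝ)) := by nlinarith [hmed₁]
        _ = ∑ i ∈ S, c * ((Z i).card : ℝ) := Finset.mul_sum _ _ _
        _ ≤ _ := Finset.sum_le_sum (fun i _ => (hpiv i).2.1)
    calc c / 2 * ((Finset.univ.biUnion Z).card : ℝ) = c / 2 * (N : ℝ) := by rw [hcardU]
      _ ≤ ∑ i ∈ S, (((Z i).filter (fun z => id z ≤ id (p i))).card : ℝ) := h1
      _ = ((S.biUnion (fun i => (Z i).filter (fun z => id z ≤ id (p i)))).card : ℝ) := by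
          rw [hcard]; push_cast; ring
      _ ≤ _ := by exact_mod_cast Finset.card_le_card hsub
  · set S := Finset.univ.filter (fun i => p m ≤ p i) with hS
    have hsub : (S.biUnion (fun i => (Z i).filter (fun z => id (p i) ≤ id z))) ⊆
        (Finset.univ.biUnion Z).filter (fun z => id (p m) ≤ id z) := by
      intro x hx
      simp only [Finset.mem_biUnion, Finset.mem_filter, hS, Finset.mem_univ, true_and, id] at hx ⊢
      obtain ⟨i, hi, hxZ, hxle⟩ := hx
      exact ⟨⟨i, hxZ⟩, hi.trans hxle⟩
    have hcard : (S.biUnion (fun i => (Z i).filter (fun z => id (p i) ≤ id z))).card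
        = ∑ i ∈ S, ((Z i).filter (fun z => id (p i) ≤ id z)).card :=
      Finset.card_biUnion (fun i _ j hj hij =>
        (hdisj i j hij).mono (Finset.filter_subset _ _) (Finset.filter_subset _ _))
    have h1 : c / 2 * (N : ℝ) ≤ ∑ i ∈ S, (((Z i).filter (fun z => id (p i) ≤ id z)).card : ℝ) := by
      calc c / 2 * (N : ℝ) ≤ c * (∑ i ∈ S, ((Z i).card : ℝ)) := by nlinarith [hmed₂]
        _ = ∑ i ∈ S, c * ((Z i).card : ℝ) := Finset.mul_sum _ _ _
        _ ≤ _ := Finset.sum_le_sum (fun i _ => (hpiv i).2.2)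
    calc c / 2 * ((Finset.univ.biUnion Z).card : ℝ) = c / 2 * (N : ℝ) := by rw [hcardU]
      _ ≤ ∑ i ∈ S, (((Z i).filter (fun z => id (p i) ≤ id z)).card : ℝ) := h1
      _ = ((S.biUnion (fun i => (Z i).filter (fun z => id (p i) ≤ id z))).card : ℝ) := by
          rw [hcard]; push_cast; ring
      _ ≤ _ := by exact_mod_cast Finset.card_le_card hsub
end

section
/- Let W be a linearly ordered set, agg a subset-monotone aggregate function on finite multisets over W, c ∈ (0,1), and r ≥ 1. For each i ∈ {1,…,r}, let Z_i be a finite nonempty set, w_i a function from Z_i to finite multisets over W, and p_i ∈ Z_i a c-pivot of Z_i with respect to the ranking z ↦ agg(w_i(z)). Let L₀ be a fixed finite multiset over W, and rank tuples (z₁,…,z_r) ∈ Z₁ × ⋯ × Z_r by F(z₁,…,z_r) = agg(L₀ ⊎ w₁(z₁) ⊎ … ⊎ w_r(z_r)), where ⊎ denotes multiset union. Then (p₁,…,p_r) is a c^r-pivot of Z₁ × ⋯ × Z_r with respect to F; that is, at least c^r · |Z₁|⋯|Z_r| tuples z satisfy F(z) ≤ F(p₁,…,p_r), and at least c^r ·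 |Z₁|⋯|Z_r| tuples z satisfy F(z) ≥ F(p₁,…,p_r). -/
/-- `agg` is subset-monotone: adding the same multiset `L` to both sides preserves
the order of aggregates. -/
def SubsetMonotone {W : Type*} [LinearOrder W] (agg : Multiset W → W) : Prop :=
  ∀ L L₁ L₂ : Multiset W, agg L₁ ≤ agg L₂ → agg (L + L₁) ≤ agg (L + L₂)

lemma aux_sum_mono {W : Type*} [LinearOrder W] {agg : Multiset W → W}
    (hmono : SubsetMonotone agg) {ι : Type*} [DecidableEq ι]
    (s : Finset ι) (A B : ι → Multiset W)
    (h : ∀ i ∈ s, agg (A i) ≤ agg (B i)) :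
    ∀ L, agg (L + ∑ i ∈ s, A i) ≤ agg (L + ∑ i ∈ s, B i) := by
  induction s using Finset.induction with
  | empty => intro L; simp
  | @insert a s ha ih =>
    intro L
    rw [Finset.sum_insert ha, Finset.sum_insert ha]
    calc agg (L + (A a + ∑ i ∈ s, A i)) = agg ((L + A a) + ∑ i ∈ s, A i) := by congr 1; abel
      _ ≤ agg ((L + A a) + ∑ i ∈ s, B i) := ih (fun i hi => h i (Finset.mem_insert_of_mem hi)) _
      _ = agg ((L + ∑ i ∈ s, B i) + A a) := by congr 1; abel
      _ ≤ agg ((L + ∑ i ∈ s, B i) + B a) := hmono _ _ _ (h a (Finset.mem_insert_self a s))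
      _ = agg (L + (B a + ∑ i ∈ s, B i)) := by congr 1; abel

theorem stmt2 {W : Type*} [LinearOrder W]
    (agg : Multiset W → W) (hmono : SubsetMonotone agg)
    (c : ℝ) (hc0 : 0 < c) (hc1 : c < 1)
    (r : ℕ) (hr : 1 ≤ r)
    {β : Fin r → Type*} [∀ i, DecidableEq (β i)]
    (Z : ∀ i, Finset (β i)) (hne : ∀ i, (Z i).Nonempty)
    (w : ∀ i, β i → Multiset W)
    (p : ∀ i, β i)
    (hpiv : ∀ i, IsCPivot c (Z i) (fun z => agg (w i z)) (p i))
    (L₀ : Multiset W) :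
    IsCPivot (c ^ r) (Fintype.piFinset Z)
      (fun z => agg (L₀ + ∑ i, w i (z i))) p := by
  refine ⟨Fintype.mem_piFinset.2 fun i => (hpiv i).1, ?_, ?_⟩
  · -- lower side
    set S := Fintype.piFinset (fun i => (Z i).filter (fun z => agg (w i z) ≤ agg (w i (p i)))) with hS
    have hsub : S ⊆ (Fintype.piFinset Z).filter
        (fun z => agg (L₀ + ∑ i, w i (z i)) ≤ agg (L₀ + ∑ i, w i (p i))) := by
      intro z hz
      rw [Fintype.mem_piFinset] at hz
      refine Finset.mem_filter.2 ⟨Fintype.mem_piFinset.2 fun i => (Finset.mem_filter.1 (hz i)).1, ?_⟩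
      exact aux_sum_mono hmono Finset.univ (fun i => w i (z i)) (fun i => w i (p i))
        (fun i _ => (Finset.mem_filter.1 (hz i)).2) L₀
    have hScard : (S.card : ℝ) = ∏ i, (((Z i).filter (fun z => agg (w i z) ≤ agg (w i (p i)))).card : ℝ) := by
      rw [hS, Fintype.card_piFinset]; push_cast; ring
    calc c ^ r * ((Fintype.piFinset Z).card : ℝ)
        = ∏ i : Fin r, (c * ((Z i).card : ℝ)) := by
          rw [Fintype.card_piFinset, Finset.prod_mul_distrib, Finset.prod_const]
          push_cast; simp
      _ ≤ ∏ i, (((Z i).filter (fun z => agg (w i z) ≤ agg (w i (p i)))).card : ℝ) := by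
          apply Finset.prod_le_prod
          · intro i _; positivity
          · intro i _; exact (hpiv i).2.1
      _ = (S.card : ℝ) := hScard.symm
      _ ≤ _ := by exact_mod_cast Finset.card_le_card hsub
  · -- upper side
    set S := Fintype.piFinset (fun i => (Z i).filter (fun z => agg (w i (p i)) ≤ agg (w i z))) with hS
    have hsub : S ⊆ (Fintype.piFinset Z).filter
        (fun z => agg (L₀ + ∑ i, w i (p i)) ≤ agg (L₀ + ∑ i, w i (z i))) := by
      intro z hz
      rw [Fintype.mem_piFinset] at hz
      refine Finset.mem_filter.2 ⟨Fintype.mem_piFinset.2 fun i => (Finset.mem_filter.1 (hz i)).1, ?_⟩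
      exact aux_sum_mono hmono Finset.univ (fun i => w i (p i)) (fun i => w i (z i))
        (fun i _ => (Finset.mem_filter.1 (hz i)).2) L₀
    have hScard : (S.card : ℝ) = ∏ i, (((Z i).filter (fun z => agg (w i (p i)) ≤ agg (w i z))).card : ℝ) := by
      rw [hS, Fintype.card_piFinset]; push_cast; ring
    calc c ^ r * ((Fintype.piFinset Z).card : ℝ)
        = ∏ i : Fin r, (c * ((Z i).card : ℝ)) := by
          rw [Fintype.card_piFinset, Finset.prod_mul_distrib, Finset.prod_const]
          push_cast; simp
      _ ≤ ∏ i, (((Z i).filter (fun z => agg (w i (p i)) ≤ agg (w i z))).card : ℝ) := by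
          apply Finset.prod_le_prod
          · intro i _; positivity
          · intro i _; exact (hpiv i).2.2
      _ = (S.card : ℝ) := hScard.symm
      _ ≤ _ := by exact_mod_cast Finset.card_le_card hsub
end

section
/- Let L₁, L₂, S₁, S₂ be finite multisets of real numbers and ε₁, ε₂ ∈ [0,1). If S₁ is an ε₁-sketch of L₁ and S₂ is an ε₂-sketch of L₂, then the multiset union S₁ ⊎ S₂ is a max(ε₁, ε₂)-sketch of L₁ ⊎ L₂. -/
/-- The number of elements of the multiset `L` smaller than `lam`, with multiplicity. -/
noncomputable def cntLT (L : Multiset ℝ) (lam : ℝ) : ℕ := (L.filter (fun x => x < lam)).card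

/-- `S` is an `eps`-sketch of `L`: for every threshold `lam`,
`(1 - eps)·cnt_{<lam}(L) ≤ cnt_{<lam}(S) ≤ cnt_{<lam}(L)`. -/
def IsSketch (eps : ℝ) (S L : Multiset ℝ) : Prop :=
  ∀ lam : ℝ,
    (1 - eps) * (cntLT L lam : ℝ) ≤ (cntLT S lam : ℝ) ∧
    (cntLT S lam : ℝ) ≤ (cntLT L lam : ℝ)

lemma cntLT_add (A B : Multiset ℝ) (lam : ℝ) : cntLT (A + B) lam = cntLT A lam + cntLT B lam := by
  simp [cntLT, Multiset.filter_add]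

theorem stmt10 (L₁ L₂ S₁ S₂ : Multiset ℝ) (eps₁ eps₂ : ℝ)
    (heps₁ : 0 ≤ eps₁) (heps₁' : eps₁ < 1) (heps₂ : 0 ≤ eps₂) (heps₂' : eps₂ < 1)
    (hS₁ : IsSketch eps₁ S₁ L₁) (hS₂ : IsSketch eps₂ S₂ L₂) :
    IsSketch (max eps₁ eps₂) (S₁ + S₂) (L₁ + L₂) := by
  intro lam
  obtain ⟨h1, h1'⟩ := hS₁ lam
  obtain ⟨h2, h2'⟩ := hS₂ lam
  rw [cntLT_add, cntLT_add]
  push_cast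
  constructor
  · have e1 : (1 - max eps₁ eps₂) * (cntLT L₁ lam : ℝ) ≤ (1 - eps₁) * cntLT L₁ lam := by
      apply mul_le_mul_of_nonneg_right _ (by positivity)
      linarith [le_max_left eps₁ eps₂]
    have e2 : (1 - max eps₁ eps₂) * (cntLT L₂ lam : ℝ) ≤ (1 - eps₂) * cntLT L₂ lam := by
      apply mul_le_mul_of_nonneg_right _ (by positivity)
      linarith [le_max_right eps₁ eps₂]
    nlinarith
  · linarith
end

section
/- Let L₁, L₂, S₁, S₂ be finite multisets of real numbers and ε₁, ε₂ ∈ [0,1). For finite multisets A, B of reals, let A ⊗ B denote the multiset of pairwise sums {a + b : a ∈ A, b ∈ B} counted with multiplicity (so |A ⊗ B| = |A|·|B|). If S₁ is an ε₁-sketch of L₁ and S₂ is an ε₂-sketch of L₂, then for every λ ∈ ℝ it holds that (1 − ε₁ − ε₂)·cnt_{<λ}(L₁ ⊗ L₂) ≤ cnt_{<λ}(S₁ ⊗ S₂) ≤ cnt_{<λ}(L₁ ⊗ L₂); in particular, if ε₁ + ε₂ < 1 then S₁ ⊗ S₂ is an (ε₁ + ε₂)-sketch of L₁ ⊗ L₂.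 -/
/-- The multiset of pairwise sums of two multisets, with multiplicity. -/
def pairSum (A B : Multiset ℝ) : Multiset ℝ :=
  A.bind (fun a => B.map (fun b => a + b))

lemma cnt_pairSum (A B : Multiset ℝ) (lam : ℝ) :
    cntLT (pairSum A B) lam = (A.map (fun a => cntLT B (lam - a))).sum := by
  classical
  induction A using Multiset.induction_on with
  | empty => simp [cntLT, pairSum]
  | cons a s ih =>
    unfold cntLT pairSum at *
    rw [Multiset.cons_bind, Multiset.filter_add, Multiset.card_add, ih,
      Multiset.map_cons, Multiset.sum_cons]
    congr 1
    rw [Multiset.filter_map, Multiset.card_map]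
    congr 1
    apply Multiset.filter_congr
    intro b _
    simp [lt_sub_iff_add_lt']

lemma pairSum_comm (A B : Multiset ℝ) : pairSum A B = pairSum B A := by
  unfold pairSum
  rw [Multiset.bind_map_comm]
  simp [add_comm]

lemma cnt_pairSum' (A B : Multiset ℝ) (lam : ℝ) :
    (cntLT (pairSum A B) lam : ℝ) = (A.map (fun a => (cntLT B (lam - a) : ℝ))).sum := by
  rw [cnt_pairSum, Nat.cast_multiset_sum, Multiset.map_map]
  rfl

theorem stmt11 (L₁ L₂ S₁ S₂ : Multiset ℝ) (eps₁ eps₂ : ℝ)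
    (heps₁ : 0 ≤ eps₁) (heps₁' : eps₁ < 1) (heps₂ : 0 ≤ eps₂) (heps₂' : eps₂ < 1)
    (hS₁ : IsSketch eps₁ S₁ L₁) (hS₂ : IsSketch eps₂ S₂ L₂) :
    (∀ lam : ℝ,
      (1 - eps₁ - eps₂) * (cntLT (pairSum L₁ L₂) lam : ℝ) ≤ (cntLT (pairSum S₁ S₂) lam : ℝ) ∧
      (cntLT (pairSum S₁ S₂) lam : ℝ) ≤ (cntLT (pairSum L₁ L₂) lam : ℝ)) ∧
    (eps₁ + eps₂ < 1 → IsSketch (eps₁ + eps₂) (pairSum S₁ S₂) (pairSum L₁ L₂)) := by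
  have main : ∀ lam : ℝ,
      (1 - eps₁ - eps₂) * (cntLT (pairSum L₁ L₂) lam : ℝ) ≤ (cntLT (pairSum S₁ S₂) lam : ℝ) ∧
      (cntLT (pairSum S₁ S₂) lam : ℝ) ≤ (cntLT (pairSum L₁ L₂) lam : ℝ) := by
    intro lam
    have h1 : (cntLT (pairSum S₁ S₂) lam : ℝ)
        = (S₂.map (fun b => (cntLT S₁ (lam - b) : ℝ))).sum := by
      rw [pairSum_comm, cnt_pairSum']
    have h2 : (cntLT (pairSum L₁ S₂) lam : ℝ)
        = (S₂.map (fun b => (cntLT L₁ (lam - b) : ℝ))).sum := by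
      rw [pairSum_comm, cnt_pairSum']
    have h3 := cnt_pairSum' L₁ S₂ lam
    have h4 := cnt_pairSum' L₁ L₂ lam
    have hUa : (cntLT (pairSum S₁ S₂) lam : ℝ) ≤ (cntLT (pairSum L₁ S₂) lam : ℝ) := by
      rw [h1, h2]
      exact Multiset.sum_map_le_sum_map _ _ (fun b _ => (hS₁ (lam - b)).2)
    have hUb : (cntLT (pairSum L₁ S₂) lam : ℝ) ≤ (cntLT (pairSum L₁ L₂) lam : ℝ) := by
      rw [h3, h4]
      exact Multiset.sum_map_le_sum_map _ _ (fun a _ => (hS₂ (lam - a)).2)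
    have hLa : (1 - eps₁) * (cntLT (pairSum L₁ S₂) lam : ℝ)
        ≤ (cntLT (pairSum S₁ S₂) lam : ℝ) := by
      rw [h1, h2, ← Multiset.sum_map_mul_left]
      exact Multiset.sum_map_le_sum_map _ _ (fun b _ => (hS₁ (lam - b)).1)
    have hLb : (1 - eps₂) * (cntLT (pairSum L₁ L₂) lam : ℝ)
        ≤ (cntLT (pairSum L₁ S₂) lam : ℝ) := by
      rw [h3, h4, ← Multiset.sum_map_mul_left]
      exact Multiset.sum_map_le_sum_map _ _ (fun a _ => (hS₂ (lam - a)).1)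
    have hX : (0:ℝ) ≤ (cntLT (pairSum L₁ L₂) lam : ℝ) := Nat.cast_nonneg _
    constructor
    · nlinarith [mul_le_mul_of_nonneg_left hLb (by linarith : (0:ℝ) ≤ 1 - eps₁)]
    · exact hUa.trans hUb
  exact ⟨main, fun _ lam => ⟨by
    have := (main lam).1
    linarith [this], (main lam).2⟩⟩
end

section
/- Let L, S, S' be finite multisets of real numbers and ε₁, ε₂ ∈ [0,1). If S' is an ε₁-sketch of S and S is an ε₂-sketch of L, then for every λ ∈ ℝ it holds that (1 − 2·max(ε₁, ε₂))·cnt_{<λ}(L) ≤ cnt_{<λ}(S') ≤ cnt_{<λ}(L); in particular, if 2·max(ε₁, ε₂) < 1 then S' is a 2·max(ε₁, ε₂)-sketch of L. -/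
theorem stmt12 (L S S' : Multiset ℝ) (eps₁ eps₂ : ℝ)
    (heps₁ : 0 ≤ eps₁) (heps₁' : eps₁ < 1) (heps₂ : 0 ≤ eps₂) (heps₂' : eps₂ < 1)
    (hS' : IsSketch eps₁ S' S) (hS : IsSketch eps₂ S L) :
    (∀ lam : ℝ,
      (1 - 2 * max eps₁ eps₂) * (cntLT L lam : ℝ) ≤ (cntLT S' lam : ℝ) ∧
      (cntLT S' lam : ℝ) ≤ (cntLT L lam : ℝ)) ∧
    (2 * max eps₁ eps₂ < 1 → IsSketch (2 * max eps₁ eps₂) S' L) := by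
  have key : ∀ lam : ℝ,
      (1 - 2 * max eps₁ eps₂) * (cntLT L lam : ℝ) ≤ (cntLT S' lam : ℝ) ∧
      (cntLT S' lam : ℝ) ≤ (cntLT L lam : ℝ) := by
    intro lam
    obtain ⟨h1, h2⟩ := hS' lam
    obtain ⟨h3, h4⟩ := hS lam
    have hm1 : eps₁ ≤ max eps₁ eps₂ := le_max_left _ _
    have hm2 : eps₂ ≤ max eps₁ eps₂ := le_max_right _ _
    have hL : (0:ℝ) ≤ (cntLT L lam : ℝ) := Nat.cast_nonneg _
    constructor
    · nlinarith [mul_le_mul_of_nonneg_left h3 (sub_nonneg.mpr heps₁'.le)]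
    · linarith
  exact ⟨key, fun _ lam => key lam⟩
end

section
/- Let L be a finite multiset of real numbers with |L| = N ≥ 2 and let ε ∈ (0,1). Then there exists a finite multiset S of real numbers with |S| = N such that S is an ε-sketch of L and S has at most ⌈4/ε⌉ + ⌈4·ln(N)/ε⌉ + 4 distinct elements. -/
/-!
Sort `L` as `x₁ ≤ ⋯ ≤ x_N` and pick ranks `1 = r₀ ≤ r₁ ≤ ⋯ ≤ r_K = N` growing by a factor
`≈ 1/(1-ε)`, so that `K ≈ log N / ε` and `(1-ε)(r_{j+1} - 1) ≤ r_j`. The sketch moves every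
element whose rank lies in `(r_j, r_{j+1}]` up to `x_{r_{j+1}}`. Moving elements up can only
lower `cnt_{<λ}`; conversely, if `c = cnt_{<λ}(L)` and `r_j` is the largest rank `≤ c`, then
`(1-ε)c ≤ r_j` and the `r_j` smallest elements of the sketch are still below `λ`. The sketch
only takes the values `x_{r_j}`.
-/

open Finset

theorem List.Pairwise.getD_lt_iff_lt_countP {α : Type*} [LinearOrder α] {l : List α}
    (hl : l.Pairwise (· ≤ ·)) (a d : α) {m : ℕ} (hm : m < l.length) :
    l.getD m d < a ↔ m < l.countP (· < a) := by
  induction l generalizing m with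
  | nil => simp at hm
  | cons x t ih =>
    obtain ⟨hx, ht⟩ := List.pairwise_cons.mp hl
    by_cases hxa : x < a
    · cases m with
      | zero => simp [hxa]
      | succ m => simpa [hxa] using ih ht (by simpa using hm)
    · have hzero : t.countP (· < a) = 0 :=
        List.countP_eq_zero.mpr fun y hy => by simpa using (not_lt.mp hxa).trans (hx y hy)
      cases m with
      | zero => simp [hxa, hzero]
      | succ m => simpa [hxa, hzero] using ih ht (by simpa using hm)

lemma cntLT_le_card (L : Multiset ℝ) (lam : ℝ) : cntLT L lam ≤ Multiset.card L :=
  Multiset.card_le_card (Multiset.filter_le _ _)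

lemma cntLT_map_range (g : ℕ → ℝ) (N : ℕ) (lam : ℝ) :
    cntLT ((Multiset.range N).map g) lam = #{i ∈ range N | g i < lam} := by
  simp [cntLT, Multiset.filter_map, Finset.card_def, Finset.filter_val]

lemma cntLT_eq_countP_sort (L : Multiset ℝ) (lam : ℝ) :
    cntLT L lam = (L.sort (· ≤ ·)).countP (· < lam) := by
  rw [cntLT, ← Multiset.countP_eq_card_filter, ← Multiset.coe_countP, Multiset.sort_eq]

/-- Junk value `0` when no element of `R` is `≥ i`. -/
noncomputable def roundUp (R : Finset ℕ) (i : ℕ) : ℕ := sInf {m | m ∈ R ∧ i ≤ m}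

section roundUp
variable {R : Finset ℕ} {i m : ℕ}

lemma roundUp_le (hm : m ∈ R) (him : i ≤ m) : roundUp R i ≤ m :=
  Nat.sInf_le (s := {m | m ∈ R ∧ i ≤ m}) ⟨hm, him⟩

lemma roundUp_mem (hm : m ∈ R) (him : i ≤ m) : roundUp R i ∈ R :=
  (Nat.sInf_mem (s := {m | m ∈ R ∧ i ≤ m}) ⟨m, hm, him⟩).1

lemma le_roundUp (hm : m ∈ R) (him : i ≤ m) : i ≤ roundUp R i :=
  (Nat.sInf_mem (s := {m | m ∈ R ∧ i ≤ m}) ⟨m, hm, him⟩).2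

end roundUp

theorem exists_sketch_of_ranks {eps : ℝ} (L : Multiset ℝ) (Q : Finset ℕ)
    (htop : Multiset.card L ∈ Q)
    (hdense : ∀ c : ℕ, 1 ≤ c → c ≤ Multiset.card L → ∃ q ∈ Q, q ≤ c ∧ (1 - eps) * c ≤ q) :
    ∃ S : Multiset ℝ, Multiset.card S = Multiset.card L ∧ IsSketch eps S L ∧
      S.toFinset.card ≤ Q.card := by
  set N := Multiset.card L
  set l := L.sort (· ≤ ·)
  have hrank : ∀ i < N, i + 1 ≤ roundUp Q (i + 1) ∧ roundUp Q (i + 1) ≤ N := fun i hi =>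
    ⟨le_roundUp htop hi, roundUp_le htop hi⟩
  -- `l.getD (q - 1) 0` is the element of rank `q` of `L`
  set g : ℕ → ℝ := fun i => l.getD (roundUp Q (i + 1) - 1) 0
  refine ⟨(Multiset.range N).map g, by simp, fun lam => ?_, ?_⟩
  · set c := cntLT L lam
    have hcN : c ≤ N := cntLT_le_card L lam
    have hcount : cntLT ((Multiset.range N).map g) lam =
        #{i ∈ range N | roundUp Q (i + 1) ≤ c} := by
      rw [cntLT_map_range, show c = _ from cntLT_eq_countP_sort L lam]
      refine congrArg card (filter_congr fun i hi => ?_)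
      have := hrank i (mem_range.mp hi)
      rw [(L.pairwise_sort _).getD_lt_iff_lt_countP lam 0 (by rw [Multiset.length_sort]; omega)]
      omega
    rw [hcount]
    constructor
    · rcases Nat.eq_zero_or_pos c with hc | hc
      · simp [hc]
      obtain ⟨q, hqQ, hqc, hq⟩ := hdense c hc hcN
      have hsub : range q ⊆ {i ∈ range N | roundUp Q (i + 1) ≤ c} := fun i hi => by
        have hi := mem_range.mp hi
        exact mem_filter.mpr ⟨mem_range.mpr (by omega), (roundUp_le hqQ hi).trans hqc⟩
      calc (1 - eps) * c ≤ q := hq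
        _ = #(range q) := by simp
        _ ≤ _ := by exact_mod_cast card_le_card hsub
    · have hsub : {i ∈ range N | roundUp Q (i + 1) ≤ c} ⊆ range c := fun i hi => by
        obtain ⟨hiN, hic⟩ := mem_filter.mp hi
        have := hrank i (mem_range.mp hiN)
        exact mem_range.mpr (by omega)
      exact_mod_cast (card_le_card hsub).trans (card_range c).le
  · have hsub : ((Multiset.range N).map g).toFinset ⊆ Q.image fun q => l.getD (q - 1) 0 :=
      fun x hx => by
      obtain ⟨i, hi, rfl⟩ := Multiset.mem_map.mp (Multiset.mem_toFinset.mp hx)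
      exact mem_image_of_mem _ (roundUp_mem htop (by simp at hi; omega))
    exact (card_le_card hsub).trans card_image_le

lemma exists_le_and_mul_le_of_step {r : ℕ → ℕ} {a : ℝ} (ha : 0 ≤ a) (ha1 : a ≤ 1)
    (hstep : ∀ j, a * ((r (j + 1) : ℝ) - 1) ≤ r j) {c : ℕ} (h0 : r 0 ≤ c) :
    ∀ K, c ≤ r K → ∃ j ≤ K, r j ≤ c ∧ a * c ≤ r j
  | 0, hK => ⟨0, le_rfl, h0, by
      rw [le_antisymm h0 hK]; exact mul_le_of_le_one_left (by positivity) ha1⟩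
  | K + 1, hK => by
    by_cases hcK : c ≤ r K
    · obtain ⟨j, hj, h⟩ := exists_le_and_mul_le_of_step ha ha1 hstep h0 K hcK
      exact ⟨j, hj.trans K.le_succ, h⟩
    rcases hK.eq_or_lt with hc | hc
    · exact ⟨K + 1, le_rfl, hc.ge, by rw [hc]; exact mul_le_of_le_one_left (by positivity) ha1⟩
    refine ⟨K, K.le_succ, by omega, (mul_le_mul_of_nonneg_left ?_ ha).trans (hstep K)⟩
    have : (c : ℝ) + 1 ≤ r (K + 1) := by exact_mod_cast hc
    linarith

noncomputable def geomRank (N : ℕ) (eps : ℝ) : ℕ → ℕ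
  | 0 => 1
  | j + 1 => min N (⌊(geomRank N eps j : ℝ) / (1 - eps)⌋₊ + 1)

section geomRank
variable {N : ℕ} {eps : ℝ}

lemma geomRank_le (hN : 1 ≤ N) : ∀ j, geomRank N eps j ≤ N
  | 0 => hN
  | _ + 1 => min_le_left _ _

lemma geomRank_step (heps : eps < 1) (j : ℕ) :
    (1 - eps) * ((geomRank N eps (j + 1) : ℝ) - 1) ≤ geomRank N eps j := by
  have hfloor : (geomRank N eps (j + 1) : ℝ) - 1 ≤ ⌊(geomRank N eps j : ℝ) / (1 - eps)⌋₊ := by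
    have : geomRank N eps (j + 1) ≤ ⌊(geomRank N eps j : ℝ) / (1 - eps)⌋₊ + 1 := min_le_right _ _
    have : (geomRank N eps (j + 1) : ℝ) ≤ ⌊(geomRank N eps j : ℝ) / (1 - eps)⌋₊ + 1 := by
      exact_mod_cast this
    linarith
  calc (1 - eps) * ((geomRank N eps (j + 1) : ℝ) - 1)
      ≤ (1 - eps) * ((geomRank N eps j : ℝ) / (1 - eps)) :=
        mul_le_mul_of_nonneg_left (hfloor.trans (Nat.floor_le (by bound))) (by linarith)
    _ = geomRank N eps j := mul_div_cancel₀ _ (by linarith)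

lemma min_pow_le_geomRank (hN : 1 ≤ N) (heps0 : 0 ≤ eps) (heps1 : eps < 1) :
    ∀ j, min (N : ℝ) ((1 - eps)⁻¹ ^ j) ≤ geomRank N eps j
  | 0 => by simp [geomRank]
  | j + 1 => by
    have ih := min_pow_le_geomRank hN heps0 heps1 j
    have ha : 1 ≤ (1 - eps)⁻¹ := one_le_inv₀ (by linarith) |>.mpr (by linarith)
    have hnext : min (N : ℝ) ((geomRank N eps j : ℝ) * (1 - eps)⁻¹) ≤ geomRank N eps (j + 1) := by
      have := Nat.lt_floor_add_one ((geomRank N eps j : ℝ) / (1 - eps))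
      simp only [geomRank, Nat.cast_min, Nat.cast_add, Nat.cast_one, ← div_eq_mul_inv]
      exact min_le_min le_rfl this.le
    refine le_trans ?_ hnext
    rcases le_or_gt (N : ℝ) ((geomRank N eps j : ℝ) * (1 - eps)⁻¹) with h | h
    · rw [min_eq_left h]
      exact min_le_left _ _
    · have hjN : (geomRank N eps j : ℝ) < N :=
        (le_mul_of_one_le_right (by positivity) ha).trans_lt h
      have : (1 - eps)⁻¹ ^ j ≤ geomRank N eps j := (min_le_iff.mp ih).resolve_left hjN.not_ge
      rw [pow_succ]
      exact min_le_min le_rfl (mul_le_mul_of_nonneg_right this (by positivity))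

lemma geomRank_eq_of_log_le (hN : 1 ≤ N) (heps0 : 0 ≤ eps) (heps1 : eps < 1) {j : ℕ}
    (hj : Real.log N ≤ eps * j) : geomRank N eps j = N := by
  have hlog : eps ≤ Real.log (1 - eps)⁻¹ := by
    rw [Real.log_inv]
    linarith [Real.log_le_sub_one_of_pos (show 0 < 1 - eps by linarith)]
  have hpow : (N : ℝ) ≤ (1 - eps)⁻¹ ^ j := by
    rw [← Real.log_le_log_iff (by positivity) (pow_pos (inv_pos.mpr (by linarith)) j),
      Real.log_pow]
    nlinarith
  have := min_pow_le_geomRank hN heps0 heps1 j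
  rw [min_eq_left hpow] at this
  exact le_antisymm (geomRank_le hN j) (by exact_mod_cast this)

end geomRank

theorem stmt13 (L : Multiset ℝ) (N : ℕ) (hN : 2 ≤ N) (hcard : Multiset.card L = N)
    (eps : ℝ) (heps0 : 0 < eps) (heps1 : eps < 1) :
    ∃ S : Multiset ℝ, Multiset.card S = N ∧ IsSketch eps S L ∧
      S.toFinset.card ≤ ⌈(4 : ℝ) / eps⌉₊ + ⌈4 * Real.log N / eps⌉₊ + 4 := by
  set K := ⌈Real.log N / eps⌉₊
  have hrK : geomRank N eps K = N := geomRank_eq_of_log_le (by omega) heps0.le heps1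
    ((div_le_iff₀' heps0).mp (Nat.le_ceil _))
  set Q := (range (K + 1)).image (geomRank N eps)
  have htop : N ∈ Q := mem_image.mpr ⟨K, self_mem_range_succ K, hrK⟩
  have hdense : ∀ c : ℕ, 1 ≤ c → c ≤ N → ∃ q ∈ Q, q ≤ c ∧ (1 - eps) * c ≤ q := by
    intro c hc1 hcN
    obtain ⟨j, hjK, hj⟩ := exists_le_and_mul_le_of_step (by linarith) (by linarith)
      (geomRank_step heps1) (show geomRank N eps 0 ≤ c from hc1) K (hcN.trans hrK.ge)
    exact ⟨_, mem_image_of_mem _ (mem_range.mpr (Nat.lt_succ_of_le hjK)), hj⟩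
  obtain ⟨S, hS, hsketch, hdistinct⟩ := exists_sketch_of_ranks L Q (hcard ▸ htop) (hcard ▸ hdense)
  have hK : K ≤ ⌈4 * Real.log N / eps⌉₊ :=
    Nat.ceil_mono (by gcongr; linarith [Real.log_natCast_nonneg N])
  refine ⟨S, hS.trans hcard, hsketch, hdistinct.trans ?_⟩
  calc Q.card ≤ K + 1 := card_image_le.trans (card_range _).le
    _ ≤ _ := by omega
end
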